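/- arXiv:1511.09194 — 2 statements merged into one kernel-verified Lean document; each statement's English description precedes it below -/
import Mathlib

section
/- Let n ≥ 1 be an integer, a ∈ 𝒜 and τ ∈ S¹. Let w be a minimal prefix of σ^n(a) for the vector τγ, i.e. Re(τγ(w)) = min{ Re(τγ(w'')) : w'' a prefix of σ^n(a) }, and let x ∈ 𝒮_a be any sequence satisfying w = σ^{n−1}(p_1^x)σ^{n−2}(p_2^x)…σ(p_{n−1}^x)p_n^x. Then v_a^{(n)}(β₀^n τ) = Re(β₀^n τ · z_a^{(n)}(x)), where β₀ = β/|β|. -/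
open Complex MeasureTheory Filter Set
open scoped BigOperators

noncomputable section

namespace IEMWandering

/-- The half-open unit interval `[0,1)`. -/
def unitIvl : Set ℝ := Set.Ico (0:ℝ) 1

/-- An interval exchange map on `[0,1)`: a bijection of `[0,1)` that is a translation
on each member of a finite partition of `[0,1)` into half-open intervals. -/
structure IEM (A : Type) [Fintype A] where
  T : ℝ → ℝ
  I : A → Set ℝ
  δ : A → ℝ
  isIco : ∀ a, ∃ l u : ℝ, l < u ∧ I a = Set.Ico l u
  subset_unit : ∀ a, I a ⊆ unitIvl
  partition : ∀ t ∈ unitIvl, ∃! a, t ∈ I a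
  translate : ∀ a, ∀ t ∈ I a, T t = t + δ a
  bijOn : Set.BijOn T unitIvl unitIvl

/-- `substIter σ n a = σⁿ(a)`. -/
def substIter {A : Type} (σ : A → List A) : ℕ → A → List A
  | 0, a => [a]
  | n+1, a => ((σ a).map (substIter σ n)).flatten

/-- Applying a substitution to a word. -/
def substW {A : Type} (σ : A → List A) (w : List A) : List A := (w.map σ).flatten

/-- `substIterW σ k w = σᵏ(w)`. -/
def substIterW {A : Type} (σ : A → List A) (k : ℕ) (w : List A) : List A :=
  (substW σ)^[k] w

/-- A substitution is primitive if some power of it maps every letter to a word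
containing every letter. -/
def Primitive {A : Type} (σ : A → List A) : Prop :=
  ∃ n : ℕ, ∀ a b : A, a ∈ substIter σ n b

/-- The matrix `M` of a substitution: `M a b` = number of occurrences of `b` in `σ a`. -/
def substMatrix {A : Type} [Fintype A] [DecidableEq A] (σ : A → List A) :
    Matrix A A ℂ := fun a b => ((σ a).count b : ℂ)

/-- `γ(w) = γ_{w_0} + … + γ_{w_{n-1}}`. -/
def wordSum {A : Type} (γ : A → ℂ) (w : List A) : ℂ := (w.map γ).sum

/-- `γ` is an eigenvector of the substitution matrix for the eigenvalue `β`. -/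
def IsEigenvector {A : Type} [Fintype A] [DecidableEq A] (σ : A → List A) (β : ℂ)
    (γ : A → ℂ) : Prop :=
  γ ≠ 0 ∧ (substMatrix σ).mulVec γ = β • γ

/-- `z` is not a root of unity. -/
def NotRootOfUnity (z : ℂ) : Prop := ∀ n : ℕ, 0 < n → z ^ n ≠ 1

/-- `β/|β|`. -/
def unitDir (β : ℂ) : ℂ := β / (‖β‖ : ℂ)

/-- A self-similar interval exchange map, together with its renormalization ratio `α`
and its associated substitution `σ`: the first-return map of `T` to `[0,α)`, rescaled
by `α⁻¹`, equals `T`; `(σ a).length` is the first return time `r_a` of `α I_a` to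
`[0,α)` and `T^[m] (α I_a) ⊆ I_{(σ a)_m}` for `m < r_a`. -/
structure SelfSimilarIEM (A : Type) [Fintype A] extends IEM A where
  α : ℝ
  α_pos : 0 < α
  α_lt_one : α < 1
  σ : A → List A
  σ_ne : ∀ a, σ a ≠ []
  visits : ∀ a, ∀ t ∈ I a, ∀ (m : ℕ) (h : m < (σ a).length),
    T^[m] (α * t) ∈ I ((σ a).get ⟨m, h⟩)
  not_first_return : ∀ a, ∀ t ∈ I a, ∀ k : ℕ, 0 < k → k < (σ a).length →
    T^[k] (α * t) ∉ Set.Ico (0:ℝ) α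
  self_similar : ∀ a, ∀ t ∈ I a, T^[(σ a).length] (α * t) = α * T t

/-- An affine interval exchange map on `[0,1)` with positive slopes. -/
structure AffineIEM (A : Type) [Fintype A] where
  f : ℝ → ℝ
  J : A → Set ℝ
  slope : A → ℝ
  intercept : A → ℝ
  slope_pos : ∀ a, 0 < slope a
  isIco : ∀ a, ∃ l u : ℝ, l < u ∧ J a = Set.Ico l u
  subset_unit : ∀ a, J a ⊆ unitIvl
  partition : ∀ t ∈ unitIvl, ∃! a, t ∈ J a
  affine : ∀ a, ∀ t ∈ J a, f t = slope a * t + intercept a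
  bijOn : Set.BijOn f unitIvl unitIvl

/-- `h` realizes a semi-conjugacy from `f` to `T`:
it is continuous, surjective, nondecreasing and `h ∘ f = T ∘ h` on `[0,1)`. -/
def SemiConjWith (T f h : ℝ → ℝ) : Prop :=
  ContinuousOn h unitIvl ∧ Set.SurjOn h unitIvl unitIvl ∧ MonotoneOn h unitIvl ∧
    Set.MapsTo h unitIvl unitIvl ∧ ∀ t ∈ unitIvl, h (f t) = T (h t)

/-- `f` is semi-conjugate with `T`. -/
def SemiConjugate (T f : ℝ → ℝ) : Prop := ∃ h, SemiConjWith T f h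

/-- `f` has a wandering interval: a nondegenerate interval whose forward iterates
are pairwise disjoint. -/
def HasWanderingInterval (f : ℝ → ℝ) : Prop :=
  ∃ u v : ℝ, u < v ∧ Set.Ico u v ⊆ unitIvl ∧
    ∀ m n : ℕ, m ≠ n → Disjoint (f^[m] '' Set.Ico u v) (f^[n] '' Set.Ico u v)

/-- Membership in the substitution subshift `Ω_σ`: every finite subword of `ω`
occurs in some `σⁿ(a)`. -/
def InOmega {A : Type} (σ : A → List A) (ω : ℤ → A) : Prop :=
  ∀ (m : ℤ) (len : ℕ), ∃ (n : ℕ) (a : A),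
    (List.ofFn fun i : Fin len => ω (m + (i.val : ℤ))) <:+: substIter σ n a

/-- The word `ω_n … ω_m`. -/
def segment {A : Type} (ω : ℤ → A) (n m : ℤ) : List A :=
  List.ofFn fun i : Fin (m - n + 1).toNat => ω (n + (i.val : ℤ))

/-- `γ_n(ω)`: the Birkhoff-like sums of `γ` along `ω`. -/
def gammaZ {A : Type} (γ : A → ℂ) (ω : ℤ → A) (n : ℤ) : ℂ :=
  if 0 ≤ n then ∑ i ∈ Finset.range n.toNat, γ (ω (i : ℤ))
  else -∑ i ∈ Finset.range (-n).toNat, γ (ω (n + (i : ℤ)))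

/-- `ω` is a minimal sequence for `γ`. -/
def MinimalSeq {A : Type} (σ : A → List A) (γ : A → ℂ) (ω : ℤ → A) : Prop :=
  InOmega σ ω ∧ ∀ n : ℤ, 0 ≤ (gammaZ γ ω n).re

/-- Triples `(p, c, s)` of a prefix, a central letter and a suffix. -/
abbrev Triple (A : Type) := List A × A × List A

/-- The set `𝒮_a` of reversed prefix-suffix expansions at `a` (indexed from `0`,
so `x m` is the triple `(p_{m+1}, c_{m+1}, s_{m+1})`). -/
def InS {A : Type} (σ : A → List A) (a : A) (x : ℕ → Triple A) : Prop :=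
  σ a = (x 0).1 ++ (x 0).2.1 :: (x 0).2.2 ∧
  ∀ m : ℕ, σ ((x m).2.1) = (x (m+1)).1 ++ (x (m+1)).2.1 :: (x (m+1)).2.2

/-- `z_a(x) = Σ_{m≥1} β^{-m} γ(p_m)`. -/
def zrep {A : Type} (β : ℂ) (γ : A → ℂ) (x : ℕ → Triple A) : ℂ :=
  ∑' m : ℕ, β⁻¹ ^ (m + 1) * wordSum γ (x m).1

/-- `z_a^{(n)}(x) = Σ_{m=1}^n β^{-m} γ(p_m)`. -/
def zrepN {A : Type} (β : ℂ) (γ : A → ℂ) (n : ℕ) (x : ℕ → Triple A) : ℂ :=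
  ∑ m ∈ Finset.range n, β⁻¹ ^ (m + 1) * wordSum γ (x m).1

/-- The fractal `𝔉_a`. -/
def Frac {A : Type} (σ : A → List A) (β : ℂ) (γ : A → ℂ) (a : A) : Set ℂ :=
  { z | ∃ x, InS σ a x ∧ zrep β γ x = z }

/-- The finite approximation `𝔉_a^{(n)}`. -/
def FracN {A : Type} (σ : A → List A) (β : ℂ) (γ : A → ℂ) (n : ℕ) (a : A) : Set ℂ :=
  { z | ∃ x, InS σ a x ∧ zrepN β γ n x = z }

/-- `v_a(τ) = min_{z ∈ 𝔉_a} Re(τ z)`. -/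
def vDir {A : Type} (σ : A → List A) (β : ℂ) (γ : A → ℂ) (a : A) (τ : ℂ) : ℝ :=
  sInf ((fun z => (τ * z).re) '' Frac σ β γ a)

/-- `v_a^{(n)}(τ) = min_{z ∈ 𝔉_a^{(n)}} Re(τ z)`. -/
def vDirN {A : Type} (σ : A → List A) (β : ℂ) (γ : A → ℂ) (n : ℕ) (a : A) (τ : ℂ) : ℝ :=
  sInf ((fun z => (τ * z).re) '' FracN σ β γ n a)

/-- The set `E_a(τ)` of extreme points of `𝔉_a` in direction `τ`. -/
def ExtPts {A : Type} (σ : A → List A) (β : ℂ) (γ : A → ℂ) (a : A) (τ : ℂ) : Set ℂ :=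
  { z ∈ Frac σ β γ a | (τ * z).re = vDir σ β γ a τ }

/-- The set `E_a^{(n)}(τ)`. -/
def ExtPtsN {A : Type} (σ : A → List A) (β : ℂ) (γ : A → ℂ) (n : ℕ) (a : A) (τ : ℂ) : Set ℂ :=
  { z ∈ FracN σ β γ n a | (τ * z).re = vDirN σ β γ n a τ }

/-- The unique representation property: every extreme point of every fractal `𝔉_a`
has a unique representation in `𝒮_a`. -/
def URP {A : Type} (σ : A → List A) (β : ℂ) (γ : A → ℂ) : Prop :=
  ∀ (a : A) (τ : ℂ), ‖τ‖ = 1 →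
    ∀ z ∈ ExtPts σ β γ a τ, ∀ x y : ℕ → Triple A,
      InS σ a x → zrep β γ x = z → InS σ a y → zrep β γ y = z → x = y

/-- `(p,c,s)` is a decomposition of `σ(a)`. -/
def IsDecomp {A : Type} (σ : A → List A) (a : A) (d : Triple A) : Prop :=
  σ a = d.1 ++ d.2.1 :: d.2.2

/-- The subfractal `𝔉_{a,(p,c,s)}`: values of representations starting with `(p,c,s)`. -/
def FracDec {A : Type} (σ : A → List A) (β : ℂ) (γ : A → ℂ) (a : A) (d : Triple A) :
    Set ℂ := { z | ∃ x, InS σ a x ∧ x 0 = d ∧ zrep β γ x = z }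

/-- `v_{a,(p,c,s)}(τ)`. -/
def vDec {A : Type} (σ : A → List A) (β : ℂ) (γ : A → ℂ) (a : A) (d : Triple A)
    (τ : ℂ) : ℝ := sInf ((fun z => (τ * z).re) '' FracDec σ β γ a d)

/-- `E_{a,(p,c,s)}(τ) = E_a(τ) ∩ 𝔉_{a,(p,c,s)}`. -/
def EDec {A : Type} (σ : A → List A) (β : ℂ) (γ : A → ℂ) (a : A) (d : Triple A)
    (τ : ℂ) : Set ℂ := ExtPts σ β γ a τ ∩ FracDec σ β γ a d

/-- The set `Ψ_a` of directions with extreme points in two distinct subfractals. -/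
def Psi {A : Type} (σ : A → List A) (β : ℂ) (γ : A → ℂ) (a : A) : Set ℂ :=
  { τ | ‖τ‖ = 1 ∧ ∃ d d' : Triple A, d ≠ d' ∧
      IsDecomp σ a d ∧ IsDecomp σ a d' ∧
      EDec σ β γ a d τ ≠ EDec σ β γ a d' τ ∧
      vDir σ β γ a τ = vDec σ β γ a d τ ∧ vDir σ β γ a τ = vDec σ β γ a d' τ }

/-- The natural (arc) distance between two points of the unit circle. -/
def arcDist (τ τ' : ℂ) : ℝ := |Complex.arg (τ / τ')|

/-- A good eigenvector: directions in `Ψ(γ)` are badly approximated by the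
orbit of `β₀ = β/|β|`. -/
def GoodEigenvector {A : Type} [Fintype A] [DecidableEq A] (σ : A → List A) (β : ℂ)
    (γ : A → ℂ) : Prop :=
  ∀ C : ℝ, 1 < C → ∀ τ ∈ ⋃ a : A, Psi σ β γ a,
    0 < Filter.liminf
      (fun n : ℕ => ((C ^ n * arcDist τ ((unitDir β) ^ n) : ℝ) : EReal)) Filter.atTop

/-- The left shift on sequences of triples. -/
def shiftS {A : Type} (x : ℕ → Triple A) : ℕ → Triple A := fun m => x (m + 1)

/-- The set `E_a^*(τ)` of limit extreme points. -/
def LimitExt {A : Type} (σ : A → List A) (β : ℂ) (γ : A → ℂ) (a : A) (τ : ℂ) :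
    Set ℂ :=
  { z | z ∈ ExtPts σ β γ a τ ∧ ∃ x, InS σ a x ∧ zrep β γ x = z ∧
      ∀ j : ℕ, 0 < j → ∃ (aj : A) (y : ℕ → Triple A), InS σ aj y ∧
        zrep β γ y ∈ ExtPts σ β γ aj ((unitDir β) ^ j * τ) ∧
        (y (j - 1)).2.1 = a ∧ (fun m => y (m + j)) = x }

/-- Minimality of an i.e.m.: every (forward) orbit is dense in `[0,1)`. -/
def MinimalIEM {A : Type} [Fintype A] (T : IEM A) : Prop :=
  ∀ t ∈ unitIvl, ∀ s ∈ unitIvl, ∀ ε : ℝ, 0 < ε → ∃ n : ℕ, |T.T^[n] t - s| < ε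

/-- `ω` is the itinerary of a full (two-sided) orbit of `T`. -/
def IsItinerary {A : Type} [Fintype A] (T : IEM A) (ω : ℤ → A) : Prop :=
  ∃ o : ℤ → ℝ, (∀ n, o n ∈ unitIvl) ∧ (∀ n, T.T (o n) = o (n + 1)) ∧
    ∀ n, o n ∈ T.I (ω n)

/-- Membership in `Ω_T`, the closure (in the product topology) of the set of
itineraries of points of `[0,1)` under `T`. -/
def InOmegaT {A : Type} [Fintype A] (T : IEM A) (ω : ℤ → A) : Prop :=
  ∀ N : ℕ, ∃ ω', IsItinerary T ω' ∧ ∀ n : ℤ, |n| ≤ (N : ℤ) → ω' n = ω n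

/-- The orientation-preserving exchange of the two halves of `[t₀, t₁)`. -/
def halfExchange (t₀ t₁ t : ℝ) : ℝ :=
  if t₀ ≤ t ∧ t < (t₀ + t₁) / 2 then t + (t₁ - t₀) / 2
  else if (t₀ + t₁) / 2 ≤ t ∧ t < t₁ then t - (t₁ - t₀) / 2
  else t

/-- The cubic Arnoux–Yoccoz interval exchange map. -/
def AYmap (α : ℝ) : ℝ → ℝ := fun t =>
  halfExchange 0 1 (halfExchange 0 α (halfExchange α (α + α^2)
    (halfExchange (α + α^2) 1 t)))

/-- The cubic Arnoux–Yoccoz substitution on `{1, …, 9}` (letters `0`-indexed):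
`σ(1)=35, σ(2)=45, σ(3)=46, σ(4)=17, σ(5)=18, σ(6)=19, σ(7)=29, σ(8)=2, σ(9)=3`. -/
def AYsub : Fin 9 → List (Fin 9) :=
  ![[2,4],[3,4],[3,5],[0,6],[0,7],[0,8],[1,8],[1],[2]]

/-- The eigenvector of the Arnoux–Yoccoz matrix for the eigenvalue `β`. -/
def AYvec (β : ℂ) : Fin 9 → ℂ :=
  ![β^2+β+1, -β, -β, -β^2-β-1, β+1, β+1, -β^2-β-2, -1, -1]

end IEMWandering

/-!
Every `y ∈ 𝒮_a` spells out a prefix `σ^{n-1}(p_1) ⋯ σ(p_{n-1}) p_n` of `σⁿ(a)`, and since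
`γ(σ(u)) = β γ(u)` its `γ`-value is `βⁿ z_a^{(n)}(y)`. Hence
`Re(β₀ⁿ τ z_a^{(n)}(y)) = |β|⁻ⁿ Re(τ γ(prefix of y))`, which is smallest for `y = x`
because the prefix of `x` is the minimal prefix `w`.
-/

namespace IEMWandering

variable {A : Type} (σ : A → List A)

@[simp]
lemma substW_nil : substW σ [] = [] := rfl

@[simp]
lemma substW_singleton (a : A) : substW σ [a] = σ a := by
  simp [substW]

@[simp]
lemma substW_append (u v : List A) : substW σ (u ++ v) = substW σ u ++ substW σ v := by
  simp [substW]

lemma substIterW_succ (k : ℕ) (w : List A) :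
    substIterW σ (k + 1) w = substIterW σ k (substW σ w) :=
  Function.iterate_succ_apply _ _ _

lemma substIterW_append (k : ℕ) (u v : List A) :
    substIterW σ k (u ++ v) = substIterW σ k u ++ substIterW σ k v := by
  induction k generalizing u v with
  | zero => rfl
  | succ k ih => simp only [substIterW_succ, substW_append, ih]

lemma substIterW_flatten (k : ℕ) (l : List (List A)) :
    substIterW σ k l.flatten = (l.map (substIterW σ k)).flatten := by
  induction l with
  | nil => induction k with
    | zero => rfl
    | succ k ih => rwa [substIterW_succ, List.flatten_nil, substW_nil]
  | cons u l ih => simp only [List.flatten_cons, List.map_cons, substIterW_append, ih]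

lemma substIter_eq_substIterW (n : ℕ) (a : A) : substIter σ n a = substIterW σ n [a] := by
  induction n generalizing a with
  | zero => rfl
  | succ n ih =>
    conv_rhs => rw [substIterW_succ, substW_singleton, ← (σ a).flatMap_singleton',
      List.flatMap_def, substIterW_flatten, List.map_map]
    simp only [substIter, Function.comp_def, ← ih]

/-- The word `σ^{n-1}(p_1) σ^{n-2}(p_2) ⋯ σ(p_{n-1}) p_n` read off `x ∈ 𝒮_a`. -/
def prefixWord (n : ℕ) (x : ℕ → Triple A) : List A :=
  (List.ofFn fun m : Fin n => substIterW σ (n - 1 - (m : ℕ)) (x (m : ℕ)).1).flatten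

lemma prefixWord_succ (n : ℕ) (x : ℕ → Triple A) :
    prefixWord σ (n + 1) x = substIterW σ n (x 0).1 ++ prefixWord σ n (shiftS x) := by
  simp only [prefixWord, List.ofFn_succ, List.flatten_cons, Fin.val_succ, Fin.val_zero]
  congr 3 with i
  rw [show n + 1 - 1 - (i + 1) = n - 1 - i by omega]
  rfl

lemma InS.shiftS {a : A} {x : ℕ → Triple A} (hx : InS σ a x) :
    InS σ (x 0).2.1 (shiftS x) :=
  ⟨hx.2 0, fun m => hx.2 (m + 1)⟩

/-- `σⁿ(a) = σ^{n-1}(p_1) σ^{n-1}(c_1) σ^{n-1}(s_1)`, and by induction `σ^{n-1}(c_1)` begins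
with the word of the shifted expansion. -/
lemma prefixWord_prefix_substIter (n : ℕ) {a : A} {x : ℕ → Triple A} (hx : InS σ a x) :
    prefixWord σ n x <+: substIter σ n a := by
  induction n generalizing a x with
  | zero => simp [prefixWord]
  | succ n ih =>
    obtain ⟨t, ht⟩ := ih (hx.shiftS σ)
    refine ⟨t ++ substIterW σ n (x 0).2.2, ?_⟩
    rw [substIter_eq_substIterW, substIterW_succ, substW_singleton, hx.1, prefixWord_succ,
      ← List.singleton_append, substIterW_append, substIterW_append, ← substIter_eq_substIterW,
      ← ht]
    simp

variable {σ}

@[simp]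
lemma wordSum_append (γ : A → ℂ) (u v : List A) :
    wordSum γ (u ++ v) = wordSum γ u + wordSum γ v := by simp [wordSum]

lemma wordSum_flatten (γ : A → ℂ) (l : List (List A)) :
    wordSum γ l.flatten = (l.map (wordSum γ)).sum := by
  induction l with
  | nil => rfl
  | cons u l ih => simp [ih]

section Eigenvector

variable [Fintype A] [DecidableEq A] {β : ℂ} {γ : A → ℂ}

lemma IsEigenvector.wordSum_apply (hγ : IsEigenvector σ β γ) (a : A) :
    wordSum γ (σ a) = β * γ a := by
  have h := congrFun hγ.2 a
  simp only [Matrix.mulVec, dotProduct, Pi.smul_apply, smul_eq_mul, substMatrix] at h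
  rw [← h, wordSum, Finset.sum_list_map_count,
    Finset.sum_subset (Finset.subset_univ _) fun b _ hb => by
      simp [List.count_eq_zero_of_not_mem (List.mem_toFinset.not.mp hb)]]
  simp [nsmul_eq_mul]

lemma IsEigenvector.wordSum_substW (hγ : IsEigenvector σ β γ) (w : List A) :
    wordSum γ (substW σ w) = β * wordSum γ w := by
  induction w with
  | nil => simp [wordSum]
  | cons a w ih =>
    rw [← List.singleton_append, substW_append, wordSum_append, wordSum_append, ih,
      substW_singleton, hγ.wordSum_apply]
    simp [wordSum, mul_add]

lemma IsEigenvector.wordSum_substIterW (hγ : IsEigenvector σ β γ) (k : ℕ) (w : List A) :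
    wordSum γ (substIterW σ k w) = β ^ k * wordSum γ w := by
  induction k generalizing w with
  | zero => simp [substIterW]
  | succ k ih => rw [substIterW_succ, ih, hγ.wordSum_substW, pow_succ, mul_assoc]

lemma IsEigenvector.wordSum_prefixWord (hγ : IsEigenvector σ β γ) (hβ : β ≠ 0) (n : ℕ)
    (x : ℕ → Triple A) : wordSum γ (prefixWord σ n x) = β ^ n * zrepN β γ n x := by
  rw [prefixWord, wordSum_flatten, List.map_ofFn, List.sum_ofFn, zrepN, Finset.mul_sum,
    ← Fin.sum_univ_eq_sum_range]
  refine Finset.sum_congr rfl fun m _ => ?_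
  rw [Function.comp_apply, hγ.wordSum_substIterW, ← mul_assoc, inv_pow,
    ← pow_sub₀ _ hβ (by omega)]
  congr 2
  omega

lemma re_unitDir_pow_mul_zrepN (hγ : IsEigenvector σ β γ) (hβ : β ≠ 0) (n : ℕ) (τ : ℂ)
    (x : ℕ → Triple A) :
    (unitDir β ^ n * τ * zrepN β γ n x).re =
      (‖β‖ ^ n)⁻¹ * (τ * wordSum γ (prefixWord σ n x)).re := by
  rw [hγ.wordSum_prefixWord hβ, unitDir, div_pow, ← re_ofReal_mul]
  push_cast
  ring_nf

end Eigenvector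

end IEMWandering

theorem minimalPrefix_extreme_general {A : Type} [Fintype A] [DecidableEq A]
    (σ : A → List A)
    (β : ℂ) (γ : A → ℂ) (hβ : 1 < ‖β‖)
    (hγ : IEMWandering.IsEigenvector σ β γ)
    (n : ℕ) (a : A) (τ : ℂ)
    (w : List A)
    (hmin : ∀ w' : List A, w' <+: IEMWandering.substIter σ n a →
      (τ * IEMWandering.wordSum γ w).re ≤ (τ * IEMWandering.wordSum γ w').re)
    (x : ℕ → IEMWandering.Triple A) (hx : IEMWandering.InS σ a x)
    (hwx : w = (List.ofFn fun m : Fin n =>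
      IEMWandering.substIterW σ (n - 1 - (m : ℕ)) (x (m : ℕ)).1).flatten) :
    IEMWandering.vDirN σ β γ n a ((IEMWandering.unitDir β) ^ n * τ) =
      ((IEMWandering.unitDir β) ^ n * τ * IEMWandering.zrepN β γ n x).re := by
  have hβ0 : β ≠ 0 := norm_pos_iff.mp (one_pos.trans hβ)
  have hw : w = IEMWandering.prefixWord σ n x := hwx
  refine IsLeast.csInf_eq ⟨⟨_, ⟨x, hx, rfl⟩, rfl⟩, ?_⟩
  rintro _ ⟨_, ⟨y, hy, rfl⟩, rfl⟩
  dsimp only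
  rw [IEMWandering.re_unitDir_pow_mul_zrepN hγ hβ0,
    IEMWandering.re_unitDir_pow_mul_zrepN hγ hβ0, ← hw]
  exact mul_le_mul_of_nonneg_left (hmin _ (IEMWandering.prefixWord_prefix_substIter σ n hy))
    (by positivity)

/-- **Lemma 5.4.** Let `n ≥ 1`, `a ∈ 𝒜`, `τ ∈ S¹`. Let `w` be a minimal prefix of
`σⁿ(a)` for the vector `τγ` and let `x ∈ 𝒮_a` satisfy
`w = σ^{n−1}(p_1)σ^{n−2}(p_2)…σ(p_{n−1})p_n`. Then
`v_a^{(n)}(β₀ⁿτ) = Re(β₀ⁿτ · z_a^{(n)}(x))`. -/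
theorem minimalPrefix_extreme {A : Type} [Fintype A] [DecidableEq A]
    (σ : A → List A) (hprim : IEMWandering.Primitive σ)
    (β : ℂ) (γ : A → ℂ) (hβ : 1 < ‖β‖)
    (hγ : IEMWandering.IsEigenvector σ β γ)
    (n : ℕ) (hn : 1 ≤ n) (a : A) (τ : ℂ) (hτ : ‖τ‖ = 1)
    (w : List A) (hw : w <+: IEMWandering.substIter σ n a)
    (hmin : ∀ w' : List A, w' <+: IEMWandering.substIter σ n a →
      (τ * IEMWandering.wordSum γ w).re ≤ (τ * IEMWandering.wordSum γ w').re)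
    (x : ℕ → IEMWandering.Triple A) (hx : IEMWandering.InS σ a x)
    (hwx : w = (List.ofFn fun m : Fin n =>
      IEMWandering.substIterW σ (n - 1 - (m : ℕ)) (x (m : ℕ)).1).flatten) :
    IEMWandering.vDirN σ β γ n a ((IEMWandering.unitDir β) ^ n * τ) =
      ((IEMWandering.unitDir β) ^ n * τ * IEMWandering.zrepN β γ n x).re :=
  minimalPrefix_extreme_general σ β γ hβ hγ n a τ w hmin x hx hwx
end
end

section
/- Let σ be the primitive substitution associated with a self-similar interval exchange map, β an eigenvalue of its matrix M with |β| > 1 such that β₀ = β/|β| is not a root of unity, and γ an eigenvector for β. Then: (i) for every τ ∈ S¹ there exists a ∈ 𝒜 such that the set E_a^*(τ) of limit extreme points is nonempty; (ii) if E_a^*(τ) is nonempty for some a ∈ 𝒜 and τ ∈ S¹, then E_a^*(τ) = E_a(τ). -/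
open Complex MeasureTheory Filter Set
open scoped BigOperators

noncomputable section

/-!
If `y` represents an extreme point of `𝔉_b` in direction `β₀^j τ`, then `S^j y` represents an
extreme point of `𝔉_{c_j}` in direction `τ`: `z_b(y) = z_b^{(j)}(y) + β^{-j} z(S^j y)`, and
multiplying by `β₀^j β^{-j} = |β|^{-j} > 0` preserves the order of real parts, so a better tail
could be spliced in. For (i), take extreme points in directions `β₀^k τ`, shift them `k` times
and pass to a limit along an ultrafilter; the limit is extreme for `τ`, and splicing it behind
the `(k - j)`-fold shifts gives the witnesses required at every level `j`. For (ii), splicing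
any representation of a point of `E_a(τ)` behind the witnesses of a limit extreme point does
not change their value in direction `β₀^j τ`.
-/

theorem Ultrafilter.exists_eventually_eq_of_finite {ι α : Type*} (U : Ultrafilter ι)
    {f : ι → α} {s : Set α} (hs : s.Finite) (hf : ∀ i, f i ∈ s) :
    ∃ a, ∀ᶠ i in U, f i = a := by
  obtain ⟨a, -, ha⟩ := Ultrafilter.eq_pure_of_finite_mem hs
    (Ultrafilter.mem_map.mpr (Filter.univ_mem' hf))
  exact ⟨a, show {b | b = a} ∈ U.map f by rw [ha]; exact rfl⟩

namespace IEMWandering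

open Topology

section Surgery

variable {A : Type}

def shiftn (j : ℕ) (x : ℕ → Triple A) : ℕ → Triple A := fun m => x (m + j)

def splice (j : ℕ) (w x : ℕ → Triple A) : ℕ → Triple A :=
  fun m => if m < j then w m else x (m - j)

/-- The central letter `c_j` of `x ∈ 𝒮_a`, with `c_0 = a`, so that `shiftn j x ∈ 𝒮_{c_j}`. -/
def center (a : A) (x : ℕ → Triple A) : ℕ → A
  | 0 => a
  | j + 1 => (x j).2.1

lemma center_of_pos {a : A} {x : ℕ → Triple A} {j : ℕ} (hj : 0 < j) :
    center a x j = (x (j - 1)).2.1 := by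
  obtain ⟨i, rfl⟩ := Nat.exists_eq_add_of_lt hj
  rfl

lemma shiftn_shiftn (i j : ℕ) (x : ℕ → Triple A) : shiftn i (shiftn j x) = shiftn (i + j) x := by
  funext m
  simp only [shiftn, Nat.add_assoc]

lemma center_shiftn (a : A) (x : ℕ → Triple A) (i j : ℕ) :
    center (center a x i) (shiftn i x) j = center a x (j + i) := by
  cases j with
  | zero => simp [center]
  | succ j => simp only [center, shiftn, Nat.add_right_comm j 1 i]

lemma splice_of_lt {j m : ℕ} (w x : ℕ → Triple A) (h : m < j) : splice j w x m = w m := if_pos h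

lemma splice_of_le {j m : ℕ} (w x : ℕ → Triple A) (h : j ≤ m) : splice j w x m = x (m - j) :=
  if_neg (not_lt.mpr h)

lemma shiftn_splice (j : ℕ) (w x : ℕ → Triple A) : shiftn j (splice j w x) = x := by
  funext m
  simp [shiftn, splice]

lemma splice_shiftn (j : ℕ) (w : ℕ → Triple A) : splice j w (shiftn j w) = w := by
  funext m
  by_cases h : m < j
  · exact splice_of_lt _ _ h
  · simp only [splice, shiftn, if_neg h, Nat.sub_add_cancel (not_lt.mp h)]

lemma center_splice (b : A) (j : ℕ) (w x : ℕ → Triple A) :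
    center b (splice j w x) j = center b w j := by
  cases j with
  | zero => rfl
  | succ j => exact congrArg (·.2.1) (splice_of_lt w x (Nat.lt_succ_self j))

variable {σ : A → List A}

lemma InS.isDecomp {a : A} {x : ℕ → Triple A} (hx : InS σ a x) (m : ℕ) :
    IsDecomp σ (center a x m) (x m) := by
  cases m with
  | zero => exact hx.1
  | succ m => exact hx.2 m

lemma InS.shiftn {a : A} {x : ℕ → Triple A} (hx : InS σ a x) (j : ℕ) :
    InS σ (center a x j) (shiftn j x) := by
  refine ⟨by simpa [IEMWandering.shiftn, IsDecomp] using hx.isDecomp j, fun m => ?_⟩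
  simpa [IEMWandering.shiftn, Nat.add_right_comm m 1 j] using hx.2 (m + j)

lemma InS.splice {b : A} {w x : ℕ → Triple A} {j : ℕ} (hw : InS σ b w)
    (hx : InS σ (center b w j) x) : InS σ b (splice j w x) := by
  cases j with
  | zero =>
    have hsplice : IEMWandering.splice 0 w x = x := by funext m; simp [IEMWandering.splice]
    rw [hsplice]
    exact hx
  | succ j =>
    refine ⟨by rw [splice_of_lt w x j.succ_pos]; exact hw.1, fun m => ?_⟩
    rcases lt_trichotomy m j with h | rfl | h
    · rw [splice_of_lt w x (by omega), splice_of_lt w x (by omega)]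
      exact hw.2 m
    · rw [splice_of_lt w x (by omega), splice_of_le w x le_rfl, Nat.sub_self]
      exact hx.1
    · rw [splice_of_le w x (by omega), splice_of_le w x (by omega),
        show m + 1 - (j + 1) = m - (j + 1) + 1 by omega]
      exact hx.2 _

lemma exists_InS (hσ : ∀ b, σ b ≠ []) (a : A) : ∃ x, InS σ a x := by
  let d : A → Triple A := fun b => ([], (σ b).head (hσ b), (σ b).tail)
  have hd : ∀ b, IsDecomp σ b (d b) := fun b => (List.cons_head_tail (hσ b)).symm
  refine ⟨fun m => d ((fun b => (d b).2.1)^[m] a), hd a, fun m => ?_⟩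
  simp only [Function.iterate_succ_apply']
  exact hd _

variable (σ) in
lemma finite_setOf_isDecomp [Finite A] : {d : Triple A | ∃ b, IsDecomp σ b d}.Finite := by
  refine (Set.finite_iUnion fun b => (σ b).inits.finite_toSet.prod
    ((σ b).finite_toSet.prod (σ b).tails.finite_toSet)).subset ?_
  rintro ⟨p, c, s⟩ ⟨b, hb : σ b = p ++ c :: s⟩
  refine Set.mem_iUnion.mpr ⟨b, ?_, ?_, ?_⟩
  · exact (List.mem_inits _ _).mpr ⟨c :: s, hb.symm⟩
  · simp [hb]
  · exact (List.mem_tails _ _).mpr ⟨p ++ [c], by simp [hb]⟩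

end Surgery

section Series

variable {A : Type} {σ : A → List A} {β : ℂ} (γ : A → ℂ)

lemma exists_zrep_term_bound [Finite A] (hβ : 1 < ‖β‖) :
    ∃ g : ℕ → ℝ, Summable g ∧ ∀ a x, InS σ a x →
      ∀ m, ‖β⁻¹ ^ (m + 1) * wordSum γ (x m).1‖ ≤ g m := by
  obtain ⟨C, hC⟩ := ((finite_setOf_isDecomp σ).image fun d => ‖wordSum γ d.1‖).bddAbove
  have hr : ‖β‖⁻¹ < 1 := inv_lt_one_of_one_lt₀ hβ
  refine ⟨fun m => C * ‖β‖⁻¹ ^ (m + 1), ?_, fun a x hx m => ?_⟩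
  · exact ((summable_geometric_of_lt_one (by positivity) hr).mul_left (C * ‖β‖⁻¹)).congr
      fun m => by ring
  · rw [norm_mul, norm_pow, norm_inv, mul_comm]
    exact mul_le_mul_of_nonneg_right (hC ⟨x m, ⟨_, hx.isDecomp m⟩, rfl⟩) (by positivity)

lemma summable_zrep [Finite A] (hβ : 1 < ‖β‖) {a : A} {x : ℕ → Triple A} (hx : InS σ a x) :
    Summable fun m => β⁻¹ ^ (m + 1) * wordSum γ (x m).1 :=
  let ⟨_, hg, hbound⟩ := exists_zrep_term_bound γ hβ
  hg.of_norm_bounded (hbound a x hx)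

lemma exists_norm_zrep_le [Finite A] (hβ : 1 < ‖β‖) :
    ∃ K, ∀ a x, InS σ a x → ‖zrep β γ x‖ ≤ K :=
  let ⟨_, hg, hbound⟩ := exists_zrep_term_bound (σ := σ) γ hβ
  ⟨_, fun a x hx => tsum_of_norm_bounded hg.hasSum (hbound a x hx)⟩

lemma zrep_eq_zrepN_add [Finite A] (hβ : 1 < ‖β‖) {a : A} {x : ℕ → Triple A}
    (hx : InS σ a x) (j : ℕ) :
    zrep β γ x = zrepN β γ j x + β⁻¹ ^ j * zrep β γ (shiftn j x) := by
  rw [zrep, ← (summable_zrep γ hβ hx).sum_add_tsum_nat_add j, zrepN, zrep, ← tsum_mul_left]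
  congr 1
  refine tsum_congr fun m => ?_
  rw [← mul_assoc, ← pow_add, Nat.add_right_comm, Nat.add_comm j]
  rfl

lemma zrep_splice [Finite A] (hβ : 1 < ‖β‖) {b : A} {w x : ℕ → Triple A} {j : ℕ}
    (hw : InS σ b w) (hx : InS σ (center b w j) x) :
    zrep β γ (splice j w x) = zrepN β γ j w + β⁻¹ ^ j * zrep β γ x := by
  rw [zrep_eq_zrepN_add γ hβ (hw.splice hx) j, shiftn_splice]
  congr 1
  exact Finset.sum_congr rfl fun m hm => by rw [splice_of_lt w x (Finset.mem_range.mp hm)]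

lemma tendsto_zrep [Finite A] (hβ : 1 < ‖β‖) {ι : Type*} {l : Filter ι} {aa : ι → A}
    {xx : ι → ℕ → Triple A} (hxx : ∀ i, InS σ (aa i) (xx i)) {a : A} {x : ℕ → Triple A}
    (hx : InS σ a x) (hagree : ∀ n, ∀ᶠ i in l, ∀ m < n, xx i m = x m) :
    Tendsto (fun i => zrep β γ (xx i)) l (𝓝 (zrep β γ x)) := by
  obtain ⟨K, hK⟩ := exists_norm_zrep_le (σ := σ) γ hβ
  refine Metric.tendsto_nhds.mpr fun ε hε => ?_
  have hsmall : Tendsto (fun n => ‖β‖⁻¹ ^ n * (K + K)) atTop (𝓝 0) := by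
    simpa using (tendsto_pow_atTop_nhds_zero_of_lt_one (by positivity)
      (inv_lt_one_of_one_lt₀ hβ)).mul_const (K + K)
  obtain ⟨n, hn⟩ := (hsmall.eventually (gt_mem_nhds hε)).exists
  filter_upwards [hagree n] with i hi
  have hN : zrepN β γ n (xx i) = zrepN β γ n x :=
    Finset.sum_congr rfl fun m hm => by rw [hi m (Finset.mem_range.mp hm)]
  rw [dist_eq_norm, zrep_eq_zrepN_add γ hβ (hxx i) n, zrep_eq_zrepN_add γ hβ hx n, hN,
    add_sub_add_left_eq_sub, ← mul_sub, norm_mul, norm_pow, norm_inv]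
  refine lt_of_le_of_lt (mul_le_mul_of_nonneg_left ?_ (by positivity)) hn
  exact (norm_sub_le _ _).trans (add_le_add (hK _ _ ((hxx i).shiftn n)) (hK _ _ (hx.shiftn n)))

variable (σ) in
lemma exists_ultrafilter_limit [Finite A] {ι : Type*} (U : Ultrafilter ι) {aa : ι → A}
    {xx : ι → ℕ → Triple A} (hxx : ∀ i, InS σ (aa i) (xx i)) :
    ∃ a x, InS σ a x ∧ (∀ᶠ i in U, aa i = a) ∧ ∀ n, ∀ᶠ i in U, ∀ m < n, xx i m = x m := by
  obtain ⟨a, ha⟩ := U.exists_eventually_eq_of_finite Set.finite_univ (fun i => Set.mem_univ (aa i))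
  choose x hx using fun m => U.exists_eventually_eq_of_finite (finite_setOf_isDecomp σ)
    fun i => ⟨_, (hxx i).isDecomp m⟩
  have hagree : ∀ n, ∀ᶠ i in U, ∀ m < n, xx i m = x m := fun n =>
    (Filter.eventually_all_finite (Set.finite_Iio n)).mpr fun m _ => hx m
  refine ⟨a, x, ⟨?_, fun m => ?_⟩, ha, hagree⟩
  · obtain ⟨i, hai, hi⟩ := (ha.and (hx 0)).exists
    simpa [hai, hi] using (hxx i).1
  · obtain ⟨i, hi⟩ := (hagree (m + 2)).exists
    simpa [hi m (by omega), hi (m + 1) (by omega)] using (hxx i).2 m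

end Series

section Extreme

variable {A : Type} {σ : A → List A} {β : ℂ} (γ : A → ℂ)

lemma vDir_le [Finite A] (hβ : 1 < ‖β‖) {a : A} {x : ℕ → Triple A} (hx : InS σ a x) (τ : ℂ) :
    vDir σ β γ a τ ≤ (τ * zrep β γ x).re := by
  obtain ⟨K, hK⟩ := exists_norm_zrep_le (σ := σ) γ hβ
  refine csInf_le ⟨-(‖τ‖ * K), ?_⟩ ⟨_, ⟨x, hx, rfl⟩, rfl⟩
  rintro _ ⟨_, ⟨y, hy, rfl⟩, rfl⟩
  have hnorm : ‖τ * zrep β γ y‖ ≤ ‖τ‖ * K := by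
    rw [norm_mul]
    exact mul_le_mul_of_nonneg_left (hK a y hy) (norm_nonneg τ)
  exact neg_le_of_abs_le ((Complex.abs_re_le_norm _).trans hnorm)

lemma le_vDir (hσ : ∀ b, σ b ≠ []) {a : A} {τ : ℂ} {v : ℝ}
    (h : ∀ x, InS σ a x → v ≤ (τ * zrep β γ x).re) : v ≤ vDir σ β γ a τ := by
  obtain ⟨x, hx⟩ := exists_InS hσ a
  refine le_csInf ⟨_, ⟨_, ⟨x, hx, rfl⟩, rfl⟩⟩ ?_
  rintro _ ⟨_, ⟨y, hy, rfl⟩, rfl⟩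
  exact h y hy

lemma exists_extreme [Finite A] (hσ : ∀ b, σ b ≠ []) (hβ : 1 < ‖β‖) (a : A) (τ : ℂ) :
    ∃ x, InS σ a x ∧ (τ * zrep β γ x).re = vDir σ β γ a τ := by
  have happrox : ∀ k : ℕ, ∃ x, InS σ a x ∧ (τ * zrep β γ x).re < vDir σ β γ a τ + 1 / (k + 1) := by
    intro k
    obtain ⟨x₀, hx₀⟩ := exists_InS hσ a
    have hpos : (0 : ℝ) < 1 / (k + 1) := by positivity
    obtain ⟨_, ⟨_, ⟨x, hx, rfl⟩, rfl⟩, hlt⟩ := exists_lt_of_csInf_lt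
      (s := (fun z => (τ * z).re) '' Frac σ β γ a)
      ⟨_, ⟨_, ⟨x₀, hx₀, rfl⟩, rfl⟩⟩ (lt_add_of_pos_right (vDir σ β γ a τ) hpos)
    exact ⟨x, hx, hlt⟩
  choose xx hxx hlt using happrox
  let U := Ultrafilter.of (atTop : Filter ℕ)
  obtain ⟨b, x, hx, hb, hagree⟩ := exists_ultrafilter_limit σ U hxx
  obtain rfl : a = b := hb.exists.choose_spec
  have hmin : Tendsto (fun k => (τ * zrep β γ (xx k)).re) atTop (𝓝 (vDir σ β γ a τ)) := by
    refine tendsto_of_tendsto_of_tendsto_of_le_of_le tendsto_const_nhds ?_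
      (fun k => vDir_le γ hβ (hxx k) τ) (fun k => (hlt k).le)
    simpa using tendsto_const_nhds.add (tendsto_one_div_add_atTop_nhds_zero_nat (𝕜 := ℝ))
  have hlim := ((continuous_re.comp (continuous_const_mul τ)).tendsto _).comp
    (tendsto_zrep γ hβ hxx hx hagree)
  exact ⟨x, hx, tendsto_nhds_unique hlim (hmin.mono_left (Ultrafilter.of_le _))⟩

lemma re_unitDir_pow_mul (hβ : β ≠ 0) (j : ℕ) (τ z : ℂ) :
    (unitDir β ^ j * τ * (β⁻¹ ^ j * z)).re = ‖β‖⁻¹ ^ j * (τ * z).re := by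
  have hβ' : (‖β‖ : ℂ) ≠ 0 := by simpa using hβ
  have hdir : unitDir β * β⁻¹ = ((‖β‖⁻¹ : ℝ) : ℂ) := by
    rw [unitDir, Complex.ofReal_inv]
    field_simp
  rw [show unitDir β ^ j * τ * (β⁻¹ ^ j * z) = (unitDir β * β⁻¹) ^ j * (τ * z) by ring, hdir,
    ← Complex.ofReal_pow, Complex.re_ofReal_mul]

lemma re_zrep_splice [Finite A] (hβ : 1 < ‖β‖) {b : A} {w x : ℕ → Triple A} {j : ℕ}
    (hw : InS σ b w) (hx : InS σ (center b w j) x) (τ : ℂ) :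
    (unitDir β ^ j * τ * zrep β γ (splice j w x)).re
      = (unitDir β ^ j * τ * zrepN β γ j w).re + ‖β‖⁻¹ ^ j * (τ * zrep β γ x).re := by
  rw [zrep_splice γ hβ hw hx, mul_add, Complex.add_re,
    re_unitDir_pow_mul (norm_pos_iff.mp (one_pos.trans hβ))]

lemma shiftn_extreme [Finite A] (hσ : ∀ b, σ b ≠ []) (hβ : 1 < ‖β‖) {b : A}
    {y : ℕ → Triple A} {j : ℕ} {τ : ℂ} (hy : InS σ b y)
    (hext : (unitDir β ^ j * τ * zrep β γ y).re = vDir σ β γ b (unitDir β ^ j * τ)) :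
    (τ * zrep β γ (shiftn j y)).re = vDir σ β γ (center b y j) τ := by
  refine le_antisymm (le_vDir γ hσ fun x hx => ?_) (vDir_le γ hβ (hy.shiftn j) τ)
  have hy' := re_zrep_splice γ hβ hy (hy.shiftn j) τ
  rw [splice_shiftn] at hy'
  have hle := vDir_le γ hβ (hy.splice hx) (unitDir β ^ j * τ)
  rw [← hext, hy', re_zrep_splice γ hβ hy hx] at hle
  exact le_of_mul_le_mul_left (add_le_add_iff_left _ |>.mp hle) (by positivity)

lemma exists_limitWitness [Finite A] (hβ : 1 < ‖β‖) {a b : A} {x y : ℕ → Triple A} {j : ℕ}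
    {τ : ℂ} (hj : 0 < j) (hy : InS σ b y)
    (hext : (unitDir β ^ j * τ * zrep β γ y).re = vDir σ β γ b (unitDir β ^ j * τ))
    (hc : center b y j = a) (hx : InS σ a x)
    (hval : (τ * zrep β γ x).re = (τ * zrep β γ (shiftn j y)).re) :
    ∃ (b : A) (y' : ℕ → Triple A), InS σ b y' ∧
      zrep β γ y' ∈ ExtPts σ β γ b (unitDir β ^ j * τ) ∧
      (y' (j - 1)).2.1 = a ∧ (fun m => y' (m + j)) = x := by
  subst hc
  have hsp := hy.splice hx
  refine ⟨b, splice j y x, hsp, ⟨⟨_, hsp, rfl⟩, ?_⟩, ?_, shiftn_splice j y x⟩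
  · have hy' := re_zrep_splice γ hβ hy (hy.shiftn j) τ
    rw [splice_shiftn] at hy'
    rw [re_zrep_splice γ hβ hy hx, hval, ← hy', hext]
  · rw [← center_of_pos hj, center_splice]

lemma exists_limitExt_nonempty [Finite A] [Nonempty A] (hσ : ∀ b, σ b ≠ []) (hβ : 1 < ‖β‖)
    (τ : ℂ) : ∃ a, (LimitExt σ β γ a τ).Nonempty := by
  obtain ⟨a₀⟩ := ‹Nonempty A›
  choose Y hY hYext using fun k : ℕ => exists_extreme γ hσ hβ a₀ (unitDir β ^ k * τ)
  have htail : ∀ j k, j ≤ k → (unitDir β ^ j * τ * zrep β γ (shiftn (k - j) (Y k))).re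
      = vDir σ β γ (center a₀ (Y k) (k - j)) (unitDir β ^ j * τ) := fun j k hjk =>
    shiftn_extreme γ hσ hβ (hY k) (by rw [← mul_assoc, ← pow_add, Nat.sub_add_cancel hjk]; exact hYext k)
  let U := Ultrafilter.of (atTop : Filter ℕ)
  obtain ⟨a, x, hx, hca, hagree⟩ := exists_ultrafilter_limit σ U fun k => (hY k).shiftn k
  have hxext : (τ * zrep β γ x).re = vDir σ β γ a τ := by
    refine tendsto_nhds_unique (((continuous_re.comp (continuous_const_mul τ)).tendsto _).comp
      (tendsto_zrep γ hβ (fun k => (hY k).shiftn k) hx hagree)) (tendsto_const_nhds.congr' ?_)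
    filter_upwards [hca] with k hk
    simpa only [Function.comp_apply, pow_zero, one_mul, Nat.sub_zero, hk]
      using (htail 0 k k.zero_le).symm
  refine ⟨a, zrep β γ x, ⟨⟨x, hx, rfl⟩, hxext⟩, x, hx, rfl, fun j hj => ?_⟩
  obtain ⟨k, hk, hjk⟩ := (hca.and (Ultrafilter.of_le atTop (eventually_ge_atTop j))).exists
  refine exists_limitWitness γ hβ hj ((hY k).shiftn (k - j)) (htail j k hjk)
    (by rw [center_shiftn, Nat.add_sub_cancel' hjk, hk]) hx ?_
  rw [shiftn_shiftn, Nat.add_sub_cancel' hjk, hxext, ← hk]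
  simpa only [pow_zero, one_mul, Nat.sub_zero] using (htail 0 k k.zero_le).symm

lemma limitExt_eq_extPts [Finite A] (hβ : 1 < ‖β‖) {a : A} {τ : ℂ}
    (hne : (LimitExt σ β γ a τ).Nonempty) : LimitExt σ β γ a τ = ExtPts σ β γ a τ := by
  obtain ⟨_, hz₀, x₀, -, rfl, hwit⟩ := hne
  refine subset_antisymm (fun z hz => hz.1) fun z hz => ?_
  obtain ⟨x, hx, rfl⟩ := hz.1
  refine ⟨hz, x, hx, rfl, fun j hj => ?_⟩
  obtain ⟨b, y, hy, hyext, hc, rfl⟩ := hwit j hj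
  exact exists_limitWitness γ hβ hj hy hyext.2 (by rwa [center_of_pos hj]) hx
    (hz.2.trans hz₀.2.symm)

end Extreme

end IEMWandering

theorem limitExtreme_general {A : Type} [Fintype A]
    (T : IEMWandering.SelfSimilarIEM A) (β : ℂ) (γ : A → ℂ)
    (hβ : 1 < ‖β‖) :
    (∀ τ : ℂ, ‖τ‖ = 1 →
      ∃ a : A, (IEMWandering.LimitExt T.σ β γ a τ).Nonempty) ∧
    (∀ (a : A) (τ : ℂ), ‖τ‖ = 1 →
      (IEMWandering.LimitExt T.σ β γ a τ).Nonempty →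
      IEMWandering.LimitExt T.σ β γ a τ = IEMWandering.ExtPts T.σ β γ a τ) := by
  have : Nonempty A := (T.partition 0 ⟨le_rfl, zero_lt_one⟩).exists.nonempty
  exact ⟨fun τ _ => IEMWandering.exists_limitExt_nonempty γ T.σ_ne hβ τ,
    fun _ _ _ => IEMWandering.limitExt_eq_extPts γ hβ⟩

/-- **Corollary 5.11.** (i) For every `τ ∈ S¹` there is `a ∈ 𝒜` with `E_a^*(τ) ≠ ∅`.
(ii) If `E_a^*(τ) ≠ ∅` for some `a ∈ 𝒜`, `τ ∈ S¹`, then `E_a^*(τ) = E_a(τ)`. -/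
theorem limitExtreme {A : Type} [Fintype A] [DecidableEq A]
    (T : IEMWandering.SelfSimilarIEM A) (β : ℂ) (γ : A → ℂ)
    (hβ : 1 < ‖β‖)
    (hβ0 : IEMWandering.NotRootOfUnity (IEMWandering.unitDir β))
    (hγ : IEMWandering.IsEigenvector T.σ β γ) :
    (∀ τ : ℂ, ‖τ‖ = 1 →
      ∃ a : A, (IEMWandering.LimitExt T.σ β γ a τ).Nonempty) ∧
    (∀ (a : A) (τ : ℂ), ‖τ‖ = 1 →
      (IEMWandering.LimitExt T.σ β γ a τ).Nonempty →
      IEMWandering.LimitExt T.σ β γ a τ = IEMWandering.ExtPts T.σ β γ a τ) :=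
  limitExtreme_general T β γ hβ
end
end
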